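/- Let A be a unital C*-algebra, q a projection in A, and p' a projection with ‖p'q − p'‖ sufficiently small (e.g. < 1/8). Then there exists a projection p'' ∈ A with p'' ≤ q and ‖p'' − p'‖ < 1/2. -/

import Mathlib

/-!
The compression `b = q p' q` lies under `q` (`b q = b`), is within `2ε` of `p'` and is
almost idempotent: `b² - b = q p' (q p' - p') q` has norm at most `ε = ‖p' q - p'‖`.
Hence `|x² - x| ≤ ε` on the spectrum of `b`, which therefore avoids `(1/5, 4/5)`.
Applying to `b` a continuous ramp that is `0` below `1/5` and `1` above `4/5` yields a
projection `p''` within `5ε/4` of `b`. Since the ramp vanishes near `0` it factors as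
`h(x) x`, so `p'' = h(b) b` and `p'' q = p''`.
-/

noncomputable def ramp (x : ℝ) : ℝ := min 1 (max 0 ((5 * x - 1) / 3))

lemma continuous_ramp : Continuous ramp := by
  unfold ramp; fun_prop

lemma ramp_of_le {x : ℝ} (hx : x ≤ 1 / 5) : ramp x = 0 := by
  rw [ramp, max_eq_left (by linarith), min_eq_right zero_le_one]

lemma ramp_of_ge {x : ℝ} (hx : 4 / 5 ≤ x) : ramp x = 1 := by
  rw [ramp, max_eq_right (by linarith), min_eq_left (by linarith)]

lemma continuous_ramp_div_max : Continuous fun x ↦ ramp x / max x (1 / 5) :=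
  continuous_ramp.div (by fun_prop) fun x ↦ (lt_max_of_lt_right (by norm_num)).ne'

lemma ramp_eq_div_max_mul (x : ℝ) : ramp x = ramp x / max x (1 / 5) * x := by
  rcases le_or_gt x (1 / 5) with hx | hx
  · simp [ramp_of_le hx]
  · rw [max_eq_left hx.le, div_mul_cancel₀ _ (by linarith)]

lemma near_zero_or_near_one_of_abs_mul_self_sub_le {x δ : ℝ} (hx : |x * x - x| ≤ δ)
    (hδ : δ < 4 / 25) :
    (x ≤ 1 / 5 ∧ |x| ≤ 5 / 4 * δ) ∨ (4 / 5 ≤ x ∧ |x - 1| ≤ 5 / 4 * δ) := by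
  rw [abs_le] at hx
  rcases le_or_gt x (1 / 2) with hx₂ | hx₂
  · have hx₅ : x ≤ 1 / 5 := by nlinarith
    refine .inl ⟨hx₅, abs_le.mpr ⟨?_, ?_⟩⟩ <;> nlinarith
  · have hx₅ : 4 / 5 ≤ x := by nlinarith
    refine .inr ⟨hx₅, abs_le.mpr ⟨?_, ?_⟩⟩ <;> nlinarith

lemma ramp_mul_self_of_abs_mul_self_sub_le {x δ : ℝ} (hx : |x * x - x| ≤ δ)
    (hδ : δ < 4 / 25) : ramp x * ramp x = ramp x := by
  rcases near_zero_or_near_one_of_abs_mul_self_sub_le hx hδ with ⟨h, -⟩ | ⟨h, -⟩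
  · simp [ramp_of_le h]
  · simp [ramp_of_ge h]

lemma abs_ramp_sub_le_of_abs_mul_self_sub_le {x δ : ℝ} (hx : |x * x - x| ≤ δ)
    (hδ : δ < 4 / 25) : |ramp x - x| ≤ 5 / 4 * δ := by
  rcases near_zero_or_near_one_of_abs_mul_self_sub_le hx hδ with ⟨h, hb⟩ | ⟨h, hb⟩
  · rwa [ramp_of_le h, zero_sub, abs_neg]
  · rwa [ramp_of_ge h, abs_sub_comm]

section Compression

variable {A : Type*} [NonUnitalNormedRing A] [StarRing A] [CStarRing A] {p q : A}

lemma norm_mul_sub_comm_of_isSelfAdjoint (hp : IsSelfAdjoint p) (hq : IsSelfAdjoint q) :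
    ‖q * p - p‖ = ‖p * q - p‖ := by
  rw [← norm_star, star_sub, star_mul, hp.star_eq, hq.star_eq]

lemma norm_compression_sub_le (hp : IsStarProjection p) (hq : IsStarProjection q) :
    ‖q * p * q - p‖ ≤ 2 * ‖p * q - p‖ := by
  have hqp := norm_mul_sub_comm_of_isSelfAdjoint hp.isSelfAdjoint hq.isSelfAdjoint
  calc ‖q * p * q - p‖ = ‖q * (p * q - p) + (q * p - p)‖ := by
        rw [mul_sub, ← mul_assoc]; abel_nf
    _ ≤ ‖q‖ * ‖p * q - p‖ + ‖q * p - p‖ :=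
        (norm_add_le _ _).trans (by gcongr; exact norm_mul_le _ _)
    _ ≤ 2 * ‖p * q - p‖ := by nlinarith [hq.norm_le, norm_nonneg (p * q - p)]

lemma norm_compression_mul_self_sub_le (hp : IsStarProjection p) (hq : IsStarProjection q) :
    ‖q * p * q * (q * p * q) - q * p * q‖ ≤ ‖p * q - p‖ := by
  have e : q * p * q * (q * p * q) - q * p * q = q * p * (q * p - p) * q := by
    simp only [mul_sub, sub_mul, mul_assoc, hq.isIdempotentElem.mul_self_mul,
      hp.isIdempotentElem.mul_self_mul]
  rw [e, ← norm_mul_sub_comm_of_isSelfAdjoint hp.isSelfAdjoint hq.isSelfAdjoint]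
  calc ‖q * p * (q * p - p) * q‖ ≤ ‖q‖ * ‖p‖ * ‖q * p - p‖ * ‖q‖ := by
        refine (norm_mul_le _ _).trans ?_
        gcongr
        exact (norm_mul_le _ _).trans (by gcongr; exact norm_mul_le _ _)
    _ ≤ 1 * 1 * ‖q * p - p‖ * 1 := by gcongr <;> first | exact hq.norm_le | exact hp.norm_le
    _ = ‖q * p - p‖ := by ring

end Compression

section RampCalculus

variable {A : Type*} [CStarAlgebra A] {b : A}

lemma IsSelfAdjoint.abs_mul_self_sub_le_of_mem_spectrum (hb : IsSelfAdjoint b) {x : ℝ}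
    (hx : x ∈ spectrum ℝ b) : |x * x - x| ≤ ‖b * b - b‖ := by
  have e : cfc (fun x : ℝ ↦ x * x - x) b = b * b - b := by
    rw [cfc_sub _ _ b, cfc_mul _ _ b, cfc_id' ℝ b]
  simpa [e] using norm_apply_le_norm_cfc (fun x : ℝ ↦ x * x - x) b hx

lemma IsSelfAdjoint.isStarProjection_cfc_ramp (hb : IsSelfAdjoint b)
    (h : ‖b * b - b‖ < 4 / 25) : IsStarProjection (cfc ramp b) where
  isIdempotentElem := by
    rw [IsIdempotentElem, ← cfc_mul ramp ramp b continuous_ramp.continuousOn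
      continuous_ramp.continuousOn]
    exact cfc_congr fun x hx ↦
      ramp_mul_self_of_abs_mul_self_sub_le (hb.abs_mul_self_sub_le_of_mem_spectrum hx) h
  isSelfAdjoint := cfc_predicate ramp b

lemma IsSelfAdjoint.norm_cfc_ramp_sub_le (hb : IsSelfAdjoint b)
    (h : ‖b * b - b‖ < 4 / 25) : ‖cfc ramp b - b‖ ≤ 5 / 4 * ‖b * b - b‖ := by
  nth_rw 2 [← cfc_id' ℝ b]
  rw [← cfc_sub ramp _ b continuous_ramp.continuousOn]
  exact norm_cfc_le (by positivity) fun x hx ↦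
    abs_ramp_sub_le_of_abs_mul_self_sub_le (hb.abs_mul_self_sub_le_of_mem_spectrum hx) h

lemma IsSelfAdjoint.cfc_ramp_mul_of_mul_eq (hb : IsSelfAdjoint b) {q : A} (hbq : b * q = b) :
    cfc ramp b * q = cfc ramp b := by
  rw [show ramp = fun x ↦ ramp x / max x (1 / 5) * x from funext ramp_eq_div_max_mul,
    cfc_mul _ _ b continuous_ramp_div_max.continuousOn, cfc_id' ℝ b, mul_assoc, hbq]

end RampCalculus

/-- If `q, p'` are projections in a unital C*-algebra with `‖p' q - p'‖ < 1/8`, then there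
is a projection `p'' ≤ q` (i.e. `p'' q = p''`) with `‖p'' - p'‖ < 1/2`. -/
theorem projection_almost_under_projection {A : Type*} [CStarAlgebra A]
    (q p' : A) (hq : IsIdempotentElem q) (hq' : IsSelfAdjoint q)
    (hp : IsIdempotentElem p') (hp' : IsSelfAdjoint p')
    (h : ‖p' * q - p'‖ < 1 / 8) :
    ∃ p'' : A, IsIdempotentElem p'' ∧ IsSelfAdjoint p'' ∧ p'' * q = p'' ∧
      ‖p'' - p'‖ < 1 / 2 := by
  have hP : IsStarProjection p' := ⟨hp, hp'⟩
  have hQ : IsStarProjection q := ⟨hq, hq'⟩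
  set b := q * p' * q
  have hb : IsSelfAdjoint b := hp'.conjugate_self hq'
  have hbq : b * q = b := by simp only [b, mul_assoc, hq.eq]
  have hdist := norm_compression_sub_le hP hQ
  have hidem := norm_compression_mul_self_sub_le hP hQ
  have hsmall : ‖b * b - b‖ < 4 / 25 := by linarith
  obtain ⟨hidem'', hsa''⟩ := hb.isStarProjection_cfc_ramp hsmall
  refine ⟨cfc ramp b, hidem'', hsa'', hb.cfc_ramp_mul_of_mul_eq hbq, ?_⟩
  calc ‖cfc ramp b - p'‖ ≤ ‖cfc ramp b - b‖ + ‖b - p'‖ :=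
        norm_sub_le_norm_sub_add_norm_sub _ _ _
    _ ≤ 5 / 4 * ‖p' * q - p'‖ + 2 * ‖p' * q - p'‖ := by
        gcongr
        exact (hb.norm_cfc_ramp_sub_le hsmall).trans (by gcongr)
    _ < 1 / 2 := by linarith
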